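/- arXiv:1306.5354 — 2 statements merged into one kernel-verified Lean document; each statement's English description precedes it below -/
import Mathlib

section
/- Let t_1^- < t_2^- < t. If F_L^j(t_i^-) ≤ t − t_i^- for i = 1,2, then t_1^- − F_L^j(t_1^-) ≤ t_2^- − F_L^j(t_2^-) ≤ n_j^-(t), i.e. the lower bound for the j-th spectral point of A to the left of t obtained from t_2^- is at least as good as the one obtained from t_1^-. -/
/-!
`Fapp A L j` is `1`-Lipschitz in `t` (a subspace realizing the bound at `t` realizes it up to
`|s - t|` at `s`), so `t ↦ t - Fapp A L j t` is monotone.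

The infimum `F` defining `Fapp A L j t₂` is attained: by Courant–Fischer, `F²` is an eigenvalue
of the compression of `(A - t₂)⋆(A - t₂)` to `L`, so some `j`-dimensional `V ≤ L` has
`‖(A - t₂)u‖ ≤ F‖u‖`. If `s < t₂ - F` and `F ≤ t - t₂`, the disc of radius `F` about `t₂` lies
in the interval from `s` to `t`; with `m`, `ρ` its midpoint and half-length,
`Re ⟪(A - s)u, (A - t)u⟫ = ‖(A - m)u‖² - ρ²‖u‖² ≤ 0` on `V`, and `A - s` is injective on `V`.
So every `s < t₂ - F` is a candidate in the supremum defining `nminus A j t`.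
-/

open scoped InnerProductSpace

variable {H : Type*} [NormedAddCommGroup H] [InnerProductSpace ℂ H] [CompleteSpace H]

/-- `Fapp A L j t` : the `j`-th min-max value of `‖(A-t)u‖/‖u‖` over
`j`-dimensional subspaces of `L`. -/
noncomputable def Fapp (A : H →L[ℂ] H) (L : Submodule ℂ H) (j : ℕ) (t : ℝ) : ℝ :=
  sInf {r : ℝ | 0 ≤ r ∧ ∃ V : Submodule ℂ H, V ≤ L ∧ Module.finrank ℂ V = j ∧
    ∀ u ∈ V, ‖A u - (t : ℂ) • u‖ ≤ r * ‖u‖}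

/-- `dd A j t` : the `j`-th min-max value of `‖(A-t)u‖/‖u‖` over all
`j`-dimensional subspaces of the space. -/
noncomputable def dd (A : H →L[ℂ] H) (j : ℕ) (t : ℝ) : ℝ :=
  sInf {r : ℝ | 0 ≤ r ∧ ∃ V : Submodule ℂ H, Module.finrank ℂ V = j ∧
    ∀ u ∈ V, ‖A u - (t : ℂ) • u‖ ≤ r * ‖u‖}

/-- `tr 1_{[a,b]}(A) ≥ j` : there is a `j`-dimensional subspace on which the
quadratic form of `(A-a)(A-b)` is non-positive. -/
def countGeIcc (A : H →L[ℂ] H) (a b : ℝ) (j : ℕ) : Prop :=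
  ∃ V : Submodule ℂ H, Module.finrank ℂ V = j ∧
    ∀ u ∈ V, (inner ℂ (A u - (a : ℂ) • u) (A u - (b : ℂ) • u) : ℂ).re ≤ 0

/-- `tr 1_{(a,b]}(A) ≥ j`. -/
def countGeIoc (A : H →L[ℂ] H) (a b : ℝ) (j : ℕ) : Prop :=
  ∃ V : Submodule ℂ H, Module.finrank ℂ V = j ∧
    (∀ u ∈ V, (inner ℂ (A u - (a : ℂ) • u) (A u - (b : ℂ) • u) : ℂ).re ≤ 0) ∧
    V ⊓ LinearMap.ker ((A - (a : ℂ) • (1 : H →L[ℂ] H) : H →L[ℂ] H) : H →ₗ[ℂ] H) = ⊥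

/-- `tr 1_{[a,b)}(A) ≥ j`. -/
def countGeIco (A : H →L[ℂ] H) (a b : ℝ) (j : ℕ) : Prop :=
  ∃ V : Submodule ℂ H, Module.finrank ℂ V = j ∧
    (∀ u ∈ V, (inner ℂ (A u - (a : ℂ) • u) (A u - (b : ℂ) • u) : ℂ).re ≤ 0) ∧
    V ⊓ LinearMap.ker ((A - (b : ℂ) • (1 : H →L[ℂ] H) : H →L[ℂ] H) : H →ₗ[ℂ] H) = ⊥

/-- `nminus A j t` : the `j`-th spectral point of `A` to the left of `t`,
counting multiplicities, i.e. `sup {s < t : tr 1_{(s,t]}(A) ≥ j}`. -/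
noncomputable def nminus (A : H →L[ℂ] H) (j : ℕ) (t : ℝ) : ℝ :=
  sSup {s : ℝ | s < t ∧ countGeIoc A s t j}

/-- `nplus A j t` : the `j`-th spectral point of `A` to the right of `t`. -/
noncomputable def nplus (A : H →L[ℂ] H) (j : ℕ) (t : ℝ) : ℝ :=
  sInf {s : ℝ | t < s ∧ countGeIco A t s j}

/-- The real spectrum of `A`. -/
def specRe (A : H →L[ℂ] H) : Set ℝ := {x : ℝ | (x : ℂ) ∈ spectrum ℂ A}

open Module

namespace OrthonormalBasis

variable {ι 𝕜 E : Type*} [Fintype ι] [RCLike 𝕜] [NormedAddCommGroup E] [InnerProductSpace 𝕜 E]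

theorem repr_apply_eq_zero_of_mem_span_image (e : OrthonormalBasis ι 𝕜 E) {s : Set ι} {w : E}
    (hw : w ∈ Submodule.span 𝕜 (e '' s)) {i : ι} (hi : i ∉ s) : e.repr w i = 0 := by
  rw [← e.coe_toBasis, Basis.mem_span_image] at hw
  rw [← e.coe_toBasis_repr_apply]
  by_contra h
  exact hi (hw (Finsupp.mem_support_iff.2 h))

theorem norm_sq_eq_sum_norm_sq_repr (e : OrthonormalBasis ι 𝕜 E) (w : E) :
    ‖w‖ ^ 2 = ∑ i, ‖e.repr w i‖ ^ 2 := by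
  rw [← e.repr.norm_map w, EuclideanSpace.norm_sq_eq]

theorem finrank_span_image_finset (e : OrthonormalBasis ι 𝕜 E) (s : Finset ι) :
    finrank 𝕜 (Submodule.span 𝕜 (e '' s)) = s.card := by
  have hli : LinearIndependent 𝕜 (e ∘ ((↑) : s → ι)) :=
    e.orthonormal.linearIndependent.comp _ Subtype.val_injective
  rw [Set.image_eq_range, ← Fintype.card_coe]
  exact finrank_span_eq_card hli

end OrthonormalBasis

theorem Submodule.exists_mem_inf_ne_zero_of_finrank_lt {K V : Type*} [DivisionRing K]
    [AddCommGroup V] [Module K V] [FiniteDimensional K V] (U W : Submodule K V)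
    (h : finrank K V < finrank K U + finrank K W) : ∃ x ∈ U, x ∈ W ∧ x ≠ 0 := by
  have hsum := Submodule.finrank_sup_add_finrank_inf_eq U W
  have hsup := Submodule.finrank_le (U ⊔ W)
  obtain ⟨x, ⟨hxU, hxW⟩, hx⟩ := Submodule.exists_mem_ne_zero_of_ne_bot fun hbot : U ⊓ W = ⊥ => by
    rw [hbot, finrank_bot] at hsum
    omega
  exact ⟨x, hxU, hxW, hx⟩

namespace LinearMap.IsSymmetric

variable {𝕜 E : Type*} [RCLike 𝕜] [NormedAddCommGroup E] [InnerProductSpace 𝕜 E]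
  [FiniteDimensional 𝕜 E] {T : E →ₗ[𝕜] E} {n : ℕ}

theorem re_inner_apply_self_eq_sum (hT : T.IsSymmetric) (hn : finrank 𝕜 E = n) (w : E) :
    RCLike.re ⟪T w, w⟫_𝕜 =
      ∑ i, hT.eigenvalues hn i * ‖(hT.eigenvectorBasis hn).repr w i‖ ^ 2 := by
  rw [← (hT.eigenvectorBasis hn).repr.inner_map_map, PiLp.inner_apply, map_sum]
  refine Finset.sum_congr rfl fun i _ => ?_
  rw [eigenvectorBasis_apply_self_apply, RCLike.inner_apply, map_mul (starRingEnd 𝕜),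
    RCLike.conj_ofReal, mul_left_comm, RCLike.mul_conj, ← RCLike.ofReal_pow,
    ← RCLike.ofReal_mul, RCLike.ofReal_re]

theorem re_inner_apply_self_le_of_mem_span (hT : T.IsSymmetric) (hn : finrank 𝕜 E = n)
    {s : Set (Fin n)} {c : ℝ} (hc : ∀ i ∈ s, hT.eigenvalues hn i ≤ c) {w : E}
    (hw : w ∈ Submodule.span 𝕜 (hT.eigenvectorBasis hn '' s)) :
    RCLike.re ⟪T w, w⟫_𝕜 ≤ c * ‖w‖ ^ 2 := by
  rw [re_inner_apply_self_eq_sum, (hT.eigenvectorBasis hn).norm_sq_eq_sum_norm_sq_repr,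
    Finset.mul_sum]
  refine Finset.sum_le_sum fun i _ => ?_
  by_cases hi : i ∈ s
  · exact mul_le_mul_of_nonneg_right (hc i hi) (sq_nonneg _)
  · simp [OrthonormalBasis.repr_apply_eq_zero_of_mem_span_image _ hw hi]

theorem le_re_inner_apply_self_of_mem_span (hT : T.IsSymmetric) (hn : finrank 𝕜 E = n)
    {s : Set (Fin n)} {c : ℝ} (hc : ∀ i ∈ s, c ≤ hT.eigenvalues hn i) {w : E}
    (hw : w ∈ Submodule.span 𝕜 (hT.eigenvectorBasis hn '' s)) :
    c * ‖w‖ ^ 2 ≤ RCLike.re ⟪T w, w⟫_𝕜 := by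
  rw [re_inner_apply_self_eq_sum, (hT.eigenvectorBasis hn).norm_sq_eq_sum_norm_sq_repr,
    Finset.mul_sum]
  refine Finset.sum_le_sum fun i _ => ?_
  by_cases hi : i ∈ s
  · exact mul_le_mul_of_nonneg_right (hc i hi) (sq_nonneg _)
  · simp [OrthonormalBasis.repr_apply_eq_zero_of_mem_span_image _ hw hi]

/-- Courant–Fischer. The eigenvalues are sorted decreasingly, so the `k`-th one is the
`(n - k)`-th smallest. -/
theorem isLeast_eigenvalues (hT : T.IsSymmetric) (hn : finrank 𝕜 E = n) (k : Fin n) :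
    IsLeast {c : ℝ | ∃ V : Submodule 𝕜 E, finrank 𝕜 V = n - k ∧
      ∀ w ∈ V, RCLike.re ⟪T w, w⟫_𝕜 ≤ c * ‖w‖ ^ 2} (hT.eigenvalues hn k) := by
  set e := hT.eigenvectorBasis hn
  refine ⟨⟨Submodule.span 𝕜 (e '' ↑(Finset.Ici k)), ?_, fun w hw => ?_⟩, ?_⟩
  · rw [e.finrank_span_image_finset, Fin.card_Ici]
  · refine hT.re_inner_apply_self_le_of_mem_span hn (fun i hi => ?_) hw
    exact hT.eigenvalues_antitone hn (Finset.mem_Ici.1 hi)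
  rintro c ⟨V, hV, hVc⟩
  obtain ⟨w, hwV, hwW, hw0⟩ := Submodule.exists_mem_inf_ne_zero_of_finrank_lt V
    (Submodule.span 𝕜 (e '' ↑(Finset.Iic k)))
    (by rw [e.finrank_span_image_finset, Fin.card_Iic, hV, hn]; omega)
  have hlow := hT.le_re_inner_apply_self_of_mem_span hn
    (fun i hi => hT.eigenvalues_antitone hn (Finset.mem_Iic.1 hi)) hwW
  have hw : 0 < ‖w‖ ^ 2 := by positivity
  exact le_of_mul_le_mul_right (hlow.trans (hVc w hwV)) hw

end LinearMap.IsSymmetric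

namespace ContinuousLinearMap

variable {𝕜 E F : Type*} [RCLike 𝕜] [NormedAddCommGroup E] [InnerProductSpace 𝕜 E]
  [NormedAddCommGroup F] [InnerProductSpace 𝕜 F] [CompleteSpace F]

theorem exists_isLeast_bound_of_finrank_eq [FiniteDimensional 𝕜 E] (S : E →L[𝕜] F) {j : ℕ}
    (hj1 : 1 ≤ j) (hj : j ≤ finrank 𝕜 E) :
    ∃ r₀ : ℝ, IsLeast {r : ℝ | 0 ≤ r ∧ ∃ V : Submodule 𝕜 E, finrank 𝕜 V = j ∧
      ∀ w ∈ V, ‖S w‖ ≤ r * ‖w‖} r₀ := by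
  have := FiniteDimensional.complete 𝕜 E
  have hP := S.isPositive_adjoint_comp_self
  have hT := hP.isSymmetric
  set k : Fin (finrank 𝕜 E) := ⟨finrank 𝕜 E - j, by omega⟩
  have hk : finrank 𝕜 E - k = j := by simp only [k]; omega
  set c := hT.eigenvalues rfl k
  have hc : 0 ≤ c := hP.toLinearMap.nonneg_eigenvalues rfl k
  obtain ⟨⟨V₀, hV₀, hV₀c⟩, hlb⟩ := hT.isLeast_eigenvalues rfl k
  have hbound : ∀ r, 0 ≤ r → ∀ w, ‖S w‖ ≤ r * ‖w‖ ↔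
      RCLike.re ⟪(adjoint S ∘L S) w, w⟫_𝕜 ≤ r ^ 2 * ‖w‖ ^ 2 := by
    intro r hr w
    rw [← apply_norm_sq_eq_inner_adjoint_left, ← mul_pow]
    exact (pow_le_pow_iff_left₀ (norm_nonneg _) (by positivity) two_ne_zero).symm
  refine ⟨√c, ⟨Real.sqrt_nonneg c, V₀, hk ▸ hV₀, fun w hw => ?_⟩, ?_⟩
  · rw [hbound _ (Real.sqrt_nonneg c), Real.sq_sqrt hc]
    exact hV₀c w hw
  · rintro r ⟨hr, V, hV, hVr⟩
    refine Real.sqrt_le_iff.2 ⟨hr, hlb ⟨V, hV.trans hk.symm, fun w hw => ?_⟩⟩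
    exact (hbound r hr w).1 (hVr w hw)

theorem exists_isLeast_bound_of_le_of_finrank_eq (B : E →L[𝕜] F) (L : Submodule 𝕜 E)
    [FiniteDimensional 𝕜 L] {j : ℕ} (hj1 : 1 ≤ j) (hj : j ≤ finrank 𝕜 L) :
    ∃ r₀ : ℝ, IsLeast {r : ℝ | 0 ≤ r ∧ ∃ V : Submodule 𝕜 E, V ≤ L ∧ finrank 𝕜 V = j ∧
      ∀ u ∈ V, ‖B u‖ ≤ r * ‖u‖} r₀ := by
  obtain ⟨r₀, h⟩ := (B.comp L.subtypeL).exists_isLeast_bound_of_finrank_eq hj1 hj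
  refine ⟨r₀, ?_⟩
  convert h using 3 with r
  refine and_congr_right fun _ => ⟨?_, ?_⟩
  · rintro ⟨V, hVL, hV, hVr⟩
    refine ⟨V.comap L.subtype, ?_, fun w hw => hVr _ hw⟩
    rw [← Submodule.finrank_map_subtype_eq, Submodule.map_comap_subtype, inf_eq_right.2 hVL, hV]
  · rintro ⟨W, hW, hWr⟩
    refine ⟨W.map L.subtype, Submodule.map_subtype_le _ _,
      (Submodule.finrank_map_subtype_eq _ _).trans hW, ?_⟩
    rintro _ ⟨w, hw, rfl⟩
    exact hWr w hw

end ContinuousLinearMap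

section InnerProductSpace

variable {𝕜 E : Type*} [RCLike 𝕜] [NormedAddCommGroup E] [InnerProductSpace 𝕜 E]

theorem re_inner_add_smul_sub_smul (x u : E) (ρ : ℝ) :
    RCLike.re ⟪x + (ρ : 𝕜) • u, x - (ρ : 𝕜) • u⟫_𝕜 = ‖x‖ ^ 2 - ρ ^ 2 * ‖u‖ ^ 2 := by
  simp only [inner_add_left, inner_sub_right, inner_smul_left, inner_smul_right, map_add,
    map_sub, RCLike.conj_ofReal, RCLike.re_ofReal_mul, inner_self_eq_norm_sq,
    ← inner_re_symm (𝕜 := 𝕜) x u]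
  ring

theorem re_inner_sub_smul_sub_smul_nonpos {v u : E} {a b s r : ℝ}
    (hv : ‖v - (s : 𝕜) • u‖ ≤ r * ‖u‖) (ha : r ≤ s - a) (hb : r ≤ b - s) :
    RCLike.re ⟪v - (a : 𝕜) • u, v - (b : 𝕜) • u⟫_𝕜 ≤ 0 := by
  set m := (a + b) / 2 with hm
  set ρ := (b - a) / 2 with hρ
  have hx : ‖v - (m : 𝕜) • u‖ ≤ ρ * ‖u‖ :=
    calc ‖v - (m : 𝕜) • u‖ = ‖(v - (s : 𝕜) • u) + ((s - m : ℝ) : 𝕜) • u‖ := by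
          push_cast; congr 1; module
      _ ≤ r * ‖u‖ + |s - m| * ‖u‖ := by
          refine norm_add_le_of_le hv ?_
          rw [norm_smul, RCLike.norm_ofReal]
      _ ≤ ρ * ‖u‖ := by
          rw [← add_mul]
          refine mul_le_mul_of_nonneg_right ?_ (norm_nonneg u)
          have := abs_sub_le_iff.2 (⟨by linarith, by linarith⟩ : s - m ≤ ρ - r ∧ m - s ≤ ρ - r)
          linarith
  have hsplit : ∀ c : ℝ, v - (c : 𝕜) • u = (v - (m : 𝕜) • u) + ((m - c : ℝ) : 𝕜) • u := by
    intro c; push_cast; module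
  rw [hsplit a, hsplit b, show m - a = ρ by linarith, show m - b = -ρ by linarith,
    RCLike.ofReal_neg, neg_smul, ← sub_eq_add_neg, re_inner_add_smul_sub_smul, sub_nonpos,
    ← mul_pow]
  exact pow_le_pow_left₀ (norm_nonneg _) hx 2

end InnerProductSpace

section Fapp

variable {E : Type*} [NormedAddCommGroup E] [InnerProductSpace ℂ E] (A : E →L[ℂ] E) {j : ℕ}

theorem countGeIoc_of_forall_norm_sub_smul_le {V : Submodule ℂ E} (hV : finrank ℂ V = j)
    {s s' t r : ℝ} (hVr : ∀ u ∈ V, ‖A u - (s : ℂ) • u‖ ≤ r * ‖u‖) (hs' : s' < s - r)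
    (ht : r ≤ t - s) : countGeIoc A s' t j := by
  refine ⟨V, hV, fun u hu => re_inner_sub_smul_sub_smul_nonpos (hVr u hu) (by linarith) ht, ?_⟩
  rw [eq_bot_iff]
  rintro u ⟨huV, huK⟩
  have hAu : A u = (s' : ℂ) • u := by simpa [sub_eq_zero] using huK
  have hnorm : (s - s') * ‖u‖ ≤ r * ‖u‖ := by
    have := hVr u huV
    rw [hAu, ← sub_smul, ← Complex.ofReal_sub, norm_smul, Complex.norm_real, Real.norm_eq_abs,
      abs_sub_comm] at this
    exact (mul_le_mul_of_nonneg_right (le_abs_self _) (norm_nonneg u)).trans this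
  have hu : ‖u‖ = 0 := by nlinarith [norm_nonneg u]
  exact (Submodule.mem_bot ℂ).2 (norm_eq_zero.1 hu)

variable [CompleteSpace E] (L : Submodule ℂ E) [FiniteDimensional ℂ L]

theorem isLeast_Fapp (hj1 : 1 ≤ j) (hj : j ≤ finrank ℂ L) (t : ℝ) :
    IsLeast {r : ℝ | 0 ≤ r ∧ ∃ V : Submodule ℂ E, V ≤ L ∧ finrank ℂ V = j ∧
      ∀ u ∈ V, ‖A u - (t : ℂ) • u‖ ≤ r * ‖u‖} (Fapp A L j t) := by
  obtain ⟨r₀, h⟩ := (A - (t : ℂ) • 1).exists_isLeast_bound_of_le_of_finrank_eq L hj1 hj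
  simp only [sub_apply, smul_apply, one_apply_eq_self] at h
  rwa [Fapp, h.csInf_eq]

theorem Fapp_le_Fapp_add_abs_sub (hj1 : 1 ≤ j) (hj : j ≤ finrank ℂ L) (s t : ℝ) :
    Fapp A L j s ≤ Fapp A L j t + |s - t| := by
  obtain ⟨⟨hF, V, hVL, hV, hVt⟩, -⟩ := isLeast_Fapp A L hj1 hj t
  refine (isLeast_Fapp A L hj1 hj s).2 ⟨add_nonneg hF (abs_nonneg _), V, hVL, hV, fun u hu => ?_⟩
  calc ‖A u - (s : ℂ) • u‖ = ‖(A u - (t : ℂ) • u) + ((t - s : ℝ) : ℂ) • u‖ := by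
        push_cast; congr 1; module
    _ ≤ Fapp A L j t * ‖u‖ + |s - t| * ‖u‖ := by
        refine norm_add_le_of_le (hVt u hu) ?_
        rw [norm_smul, Complex.norm_real, Real.norm_eq_abs, abs_sub_comm]
    _ = (Fapp A L j t + |s - t|) * ‖u‖ := by ring

theorem monotone_sub_Fapp (hj1 : 1 ≤ j) (hj : j ≤ finrank ℂ L) :
    Monotone fun t => t - Fapp A L j t := by
  intro s t hst
  have := Fapp_le_Fapp_add_abs_sub A L hj1 hj t s
  rw [abs_of_nonneg (sub_nonneg.2 hst)] at this
  dsimp only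
  linarith

theorem sub_Fapp_le_nminus (hj1 : 1 ≤ j) (hj : j ≤ finrank ℂ L) {s t : ℝ}
    (hF : Fapp A L j s ≤ t - s) : s - Fapp A L j s ≤ nminus A j t := by
  obtain ⟨⟨hF0, V, -, hV, hVr⟩, -⟩ := isLeast_Fapp A L hj1 hj s
  refine le_of_forall_lt_imp_le_of_dense fun s' hs' => le_csSup ⟨t, fun _ h => h.1.le⟩ ?_
  exact ⟨by linarith, countGeIoc_of_forall_norm_sub_smul_le A hV hVr hs' hF⟩

end Fapp

theorem stmt_4_general (A : H →L[ℂ] H)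
    (L : Submodule ℂ H) [FiniteDimensional ℂ L]
    (j : ℕ) (hj1 : 1 ≤ j) (hj : j ≤ Module.finrank ℂ L)
    (t t1 t2 : ℝ) (h12 : t1 < t2)
    (hF2 : Fapp A L j t2 ≤ t - t2) :
    t1 - Fapp A L j t1 ≤ t2 - Fapp A L j t2 ∧
      t2 - Fapp A L j t2 ≤ nminus A j t :=
  ⟨monotone_sub_Fapp A L hj1 hj h12.le, sub_Fapp_le_nminus A L hj1 hj hF2⟩

/-- the lower bound obtained from `t₂⁻` is at least as good as the
one obtained from `t₁⁻ < t₂⁻`. -/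
theorem stmt_4 (A : H →L[ℂ] H) (hA : IsSelfAdjoint A)
    (L : Submodule ℂ H) [FiniteDimensional ℂ L]
    (j : ℕ) (hj1 : 1 ≤ j) (hj : j ≤ Module.finrank ℂ L)
    (t t1 t2 : ℝ) (h12 : t1 < t2) (h2t : t2 < t)
    (hF1 : Fapp A L j t1 ≤ t - t1) (hF2 : Fapp A L j t2 ≤ t - t2) :
    t1 - Fapp A L j t1 ≤ t2 - Fapp A L j t2 ∧
      t2 - Fapp A L j t2 ≤ nminus A j t :=
  stmt_4_general A L j hj1 hj t t1 t2 h12 hF2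
end

section
/- Suppose t ∉ spec(A) and the approximation errors satisfy Σ_{j=1}^m ε_j² < 𝔡_1(t)²/6, where ε_j = ‖(A−t)(w_j − φ_j)‖ and φ_j are orthonormal eigenvectors of |A−t| with |A−t|φ_j = 𝔡_j(t)φ_j, w_j ∈ L. Then F_L^j(t) − 𝔡_j(t) ≤ 3 (𝔡_j(t)/𝔡_1(t)²) Σ_{k=1}^j ε_k² for all j = 1,…,m (quadratic order of convergence). -/
open scoped InnerProductSpace

variable {H : Type*} [NormedAddCommGroup H] [InnerProductSpace ℂ H] [CompleteSpace H]

/-!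
Write `B = A - t` and let `T` be the orthogonal projection onto `L` for the inner product
`⟪B u, B v⟫`. For `j ≤ m`, `T` maps `P = span {φ₁, …, φⱼ}` onto a `j`-dimensional subspace of `L`
on which `‖B u‖ ≤ (1 + 3θ) 𝔡ⱼ ‖u‖`, where `θ = (ε₁² + ⋯ + εⱼ²) / 𝔡₁²`. Indeed
`‖B (T p)‖ ≤ ‖B p‖ ≤ 𝔡ⱼ ‖p‖`. Conversely, write `p = ∑ aₖ φₖ = B² z` with
`z = ∑ (aₖ / 𝔡ₖ²) φₖ`. Galerkin orthogonality gives `⟪p, p - T p⟫ = ⟪B (z - g), B (p - T p)⟫`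
for every `g ∈ L`. Replacing the `φₖ` by the `wₖ` in `z` (to get `g`) and in `p` (to get a
competitor for `T p`) bounds both factors by `∑ |aₖ| εₖ`, up to a factor `𝔡₁⁻²` in the first,
and `(∑ |aₖ| εₖ)² ≤ θ 𝔡₁² ‖p‖²` by Cauchy–Schwarz; so `‖T p‖² ≥ (1 - 2θ) ‖p‖²`.
Finally `(1 + 3θ)² (1 - 2θ) ≥ 1` for `0 ≤ θ ≤ 1/6`.
-/

theorem Submodule.exists_le_finrank_eq {K M : Type*} [DivisionRing K] [AddCommGroup M]
    [Module K M] (V : Submodule K M) {k : ℕ} (hk : k ≤ Module.finrank K V) :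
    ∃ W ≤ V, Module.finrank K W = k := by
  obtain ⟨f, hf⟩ := exists_linearIndependent_of_le_finrank hk
  refine ⟨Submodule.span K (Set.range (V.subtype ∘ f)), ?_, ?_⟩
  · exact Submodule.span_le.mpr (Set.range_subset_iff.mpr fun i => (f i).2)
  · rw [finrank_span_eq_card (hf.map' V.subtype V.ker_subtype), Fintype.card_fin]

section Galerkin

variable {𝕜 E : Type*} [RCLike 𝕜] [NormedAddCommGroup E] [InnerProductSpace 𝕜 E]

theorem Orthonormal.re_inner_sum_smul {ι : Type*} [Fintype ι] {ψ : ι → E}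
    (hψ : Orthonormal 𝕜 ψ) (a : ι → 𝕜) (μ : ι → ℝ) :
    RCLike.re ⟪∑ k, a k • ψ k, ∑ k, (a k * μ k) • ψ k⟫_𝕜 = ∑ k, ‖a k‖ ^ 2 * μ k := by
  rw [hψ.inner_sum, map_sum]
  refine Finset.sum_congr rfl fun k _ => ?_
  rw [← mul_assoc, RCLike.conj_mul, ← RCLike.ofReal_pow, ← RCLike.ofReal_mul, RCLike.ofReal_re]

theorem Orthonormal.norm_sum_smul_sq {ι : Type*} [Fintype ι] {ψ : ι → E}
    (hψ : Orthonormal 𝕜 ψ) (a : ι → 𝕜) : ‖∑ k, a k • ψ k‖ ^ 2 = ∑ k, ‖a k‖ ^ 2 := by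
  simpa using hψ.re_inner_sum_smul a 1

/-- `T` is the orthogonal projection onto `L` for the inner product `⟪B u, B v⟫`
(the paper's `P_L`, with `B = A - t`). -/
def IsGalerkinProjection (B : E →L[𝕜] E) (L : Submodule 𝕜 E) [FiniteDimensional 𝕜 L]
    (T : E →ₗ[𝕜] E) : Prop :=
  ∀ p, T p ∈ L ∧ B (T p) = (L.map (B : E →ₗ[𝕜] E)).starProjection (B p)

theorem exists_isGalerkinProjection (B : E →L[𝕜] E) (hB : Function.Injective B)
    (L : Submodule 𝕜 E) [FiniteDimensional 𝕜 L] :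
    ∃ T : E →ₗ[𝕜] E, IsGalerkinProjection B L T := by
  let e := Submodule.equivMapOfInjective (B : E →ₗ[𝕜] E) hB L
  refine ⟨L.subtype ∘ₗ e.symm.toLinearMap ∘ₗ
    ((L.map (B : E →ₗ[𝕜] E)).orthogonalProjectionOnto : E →ₗ[𝕜] _) ∘ₗ (B : E →ₗ[𝕜] E),
    fun p => ⟨Submodule.coe_mem _, ?_⟩⟩
  have h := congrArg Subtype.val
    (e.apply_symm_apply ((L.map (B : E →ₗ[𝕜] E)).orthogonalProjectionOnto (B p)))
  rwa [Submodule.coe_equivMapOfInjective_apply] at h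

namespace IsGalerkinProjection

variable {B : E →L[𝕜] E} {L : Submodule 𝕜 E} [FiniteDimensional 𝕜 L] {T : E →ₗ[𝕜] E}

theorem norm_map_apply_le (hT : IsGalerkinProjection B L T) (p : E) :
    ‖B (T p)‖ ≤ ‖B p‖ := by
  rw [(hT p).2]
  exact Submodule.norm_starProjection_apply_le _ _

theorem norm_map_sub_le (hT : IsGalerkinProjection B L T) (p : E) {l : E} (hl : l ∈ L) :
    ‖B p - B (T p)‖ ≤ ‖B p - B l‖ := by
  rw [(hT p).2, Submodule.starProjection_minimal]
  exact ciInf_le ⟨0, by rintro _ ⟨x, rfl⟩; exact norm_nonneg _⟩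
    (⟨B l, Submodule.mem_map_of_mem hl⟩ : L.map (B : E →ₗ[𝕜] E))

theorem inner_map_map_sub_eq (hT : IsGalerkinProjection B L T)
    (hB : (B : E →ₗ[𝕜] E).IsSymmetric) (z p : E) {g : E} (hg : g ∈ L) :
    ⟪B (B z), p - T p⟫_𝕜 = ⟪B (z - g), B p - B (T p)⟫_𝕜 := by
  have horth : ⟪B g, B p - B (T p)⟫_𝕜 = 0 := by
    rw [(hT p).2, inner_eq_zero_symm]
    exact Submodule.starProjection_inner_eq_zero _ _ (Submodule.mem_map_of_mem hg)
  rw [← ContinuousLinearMap.coe_coe B, hB, map_sub, map_sub, ContinuousLinearMap.coe_coe,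
    inner_sub_left, horth, sub_zero]

end IsGalerkinProjection

section Eigen

variable {B : E →L[𝕜] E} {ι : Type*} [Fintype ι] {ψ : ι → E} {d : ι → ℝ}

theorem norm_map_sum_smul_sq (hB : (B : E →ₗ[𝕜] E).IsSymmetric) (hψ : Orthonormal 𝕜 ψ)
    (heig : ∀ k, B (B (ψ k)) = ((d k : 𝕜) ^ 2) • ψ k) (a : ι → 𝕜) :
    ‖B (∑ k, a k • ψ k)‖ ^ 2 = ∑ k, ‖a k‖ ^ 2 * d k ^ 2 := by
  have hBB : B (B (∑ k, a k • ψ k)) = ∑ k, (a k * ((d k ^ 2 : ℝ) : 𝕜)) • ψ k := by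
    simp only [map_sum, map_smul, heig, smul_smul, RCLike.ofReal_pow]
  rw [@norm_sq_eq_re_inner 𝕜, ← ContinuousLinearMap.coe_coe B, hB, ContinuousLinearMap.coe_coe,
    hBB, hψ.re_inner_sum_smul]

theorem norm_map_sum_smul_le (hB : (B : E →ₗ[𝕜] E).IsSymmetric) (hψ : Orthonormal 𝕜 ψ)
    (heig : ∀ k, B (B (ψ k)) = ((d k : 𝕜) ^ 2) • ψ k) {D : ℝ} (hD : 0 ≤ D)
    (hdD : ∀ k, |d k| ≤ D) (a : ι → 𝕜) :
    ‖B (∑ k, a k • ψ k)‖ ≤ D * ‖∑ k, a k • ψ k‖ := by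
  refine (pow_le_pow_iff_left₀ (norm_nonneg _) (by positivity) two_ne_zero).mp ?_
  rw [mul_pow, hψ.norm_sum_smul_sq, norm_map_sum_smul_sq hB hψ heig, Finset.mul_sum]
  refine Finset.sum_le_sum fun k _ => ?_
  rw [mul_comm (D ^ 2)]
  exact mul_le_mul_of_nonneg_left (sq_le_sq' (abs_le.mp (hdD k)).1 (abs_le.mp (hdD k)).2)
    (sq_nonneg _)

theorem IsGalerkinProjection.sq_norm_le_sq_norm_apply {L : Submodule 𝕜 E} [FiniteDimensional 𝕜 L]
    {T : E →ₗ[𝕜] E} (hT : IsGalerkinProjection B L T) (hB : (B : E →ₗ[𝕜] E).IsSymmetric)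
    (hψ : Orthonormal 𝕜 ψ) (heig : ∀ k, B (B (ψ k)) = ((d k : 𝕜) ^ 2) • ψ k)
    {c : ℝ} (hc : 0 < c) (hcd : ∀ k, c ≤ d k) {v : ι → E} (hv : ∀ k, v k ∈ L)
    {ε : ι → ℝ} (hε : ∀ k, ‖B (v k - ψ k)‖ ≤ ε k) (a : ι → 𝕜) :
    (1 - 2 * (∑ k, ε k ^ 2) / c ^ 2) * ‖∑ k, a k • ψ k‖ ^ 2 ≤ ‖T (∑ k, a k • ψ k)‖ ^ 2 := by
  set p := ∑ k, a k • ψ k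
  set s := ∑ k, ‖a k‖ ^ 2
  set e := ∑ k, ε k ^ 2
  set S := ∑ k, ‖a k‖ * ε k
  have hεnn : ∀ k, 0 ≤ ε k := fun k => (norm_nonneg _).trans (hε k)
  have hSnn : 0 ≤ S := Finset.sum_nonneg fun k _ => mul_nonneg (norm_nonneg _) (hεnn k)
  have hdpos : ∀ k, 0 < d k := fun k => hc.trans_le (hcd k)
  have herr : ∀ b : ι → 𝕜, ‖B (∑ k, b k • v k) - B (∑ k, b k • ψ k)‖ ≤ ∑ k, ‖b k‖ * ε k := by
    intro b
    rw [← map_sub, ← Finset.sum_sub_distrib, map_sum]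
    refine norm_sum_le_of_le _ fun k _ => ?_
    rw [← smul_sub, map_smul, norm_smul]
    exact mul_le_mul_of_nonneg_left (hε k) (norm_nonneg _)
  have hres : ‖B p - B (T p)‖ ≤ S := by
    refine (hT.norm_map_sub_le p (l := ∑ k, a k • v k)
      (Submodule.sum_mem _ fun k _ => L.smul_mem (a k) (hv k))).trans ?_
    rw [norm_sub_rev]
    exact herr a
  set b : ι → 𝕜 := fun k => a k / (d k : 𝕜) ^ 2
  have hBz : B (B (∑ k, b k • ψ k)) = p := by
    simp only [map_sum, map_smul, heig, smul_smul, b]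
    refine Finset.sum_congr rfl fun k _ => ?_
    rw [div_mul_cancel₀ _ (by exact_mod_cast (pow_pos (hdpos k) 2).ne')]
  have hzg : ‖B (∑ k, b k • ψ k - ∑ k, b k • v k)‖ ≤ S / c ^ 2 := by
    rw [map_sub, norm_sub_rev]
    refine (herr b).trans ?_
    rw [Finset.sum_div]
    refine Finset.sum_le_sum fun k _ => ?_
    rw [norm_div, norm_pow, RCLike.norm_ofReal, abs_of_pos (hdpos k), div_mul_eq_mul_div]
    gcongr
    · exact mul_nonneg (norm_nonneg _) (hεnn k)
    · exact hcd k
  have hCS : S ^ 2 ≤ s * e := Finset.sum_mul_sq_le_sq_mul_sq _ _ _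
  have hinner : ‖⟪p, p - T p⟫_𝕜‖ ≤ s * e / c ^ 2 := by
    have h := hT.inner_map_map_sub_eq hB (∑ k, b k • ψ k) p (g := ∑ k, b k • v k)
      (Submodule.sum_mem _ fun k _ => L.smul_mem (b k) (hv k))
    rw [hBz] at h
    rw [h]
    calc _ ≤ S / c ^ 2 * S := (norm_inner_le_norm _ _).trans
            (mul_le_mul hzg hres (norm_nonneg _) (div_nonneg hSnn (sq_nonneg c)))
      _ = S ^ 2 / c ^ 2 := by ring
      _ ≤ s * e / c ^ 2 := by gcongr
  have hexpand : ‖T p‖ ^ 2 = ‖p‖ ^ 2 - 2 * RCLike.re ⟪p, p - T p⟫_𝕜 + ‖p - T p‖ ^ 2 := by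
    simpa only [sub_sub_cancel] using norm_sub_sq (𝕜 := 𝕜) p (p - T p)
  have hre := (RCLike.re_le_norm (⟪p, p - T p⟫_𝕜)).trans hinner
  have hlin : (1 - 2 * e / c ^ 2) * s = s - 2 * (s * e / c ^ 2) := by ring
  rw [hexpand, hψ.norm_sum_smul_sq a, hlin]
  linarith [sq_nonneg ‖p - T p‖]

end Eigen

theorem exists_finrank_eq_norm_map_le {ι : Type*} [Fintype ι] (B : E →L[𝕜] E)
    (hB : (B : E →ₗ[𝕜] E).IsSymmetric) (hBinj : Function.Injective B)
    (L : Submodule 𝕜 E) [FiniteDimensional 𝕜 L] {ψ v : ι → E} {d ε : ι → ℝ}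
    (hψ : Orthonormal 𝕜 ψ) (heig : ∀ k, B (B (ψ k)) = ((d k : 𝕜) ^ 2) • ψ k)
    {c D : ℝ} (hc : 0 < c) (hcd : ∀ k, c ≤ d k) (hD : 0 ≤ D) (hdD : ∀ k, d k ≤ D)
    (hv : ∀ k, v k ∈ L) (hε : ∀ k, ‖B (v k - ψ k)‖ ≤ ε k)
    (hsum : ∑ k, ε k ^ 2 ≤ c ^ 2 / 6) :
    ∃ V : Submodule 𝕜 E, V ≤ L ∧ Module.finrank 𝕜 V = Fintype.card ι ∧
      ∀ u ∈ V, ‖B u‖ ≤ (D + 3 * D / c ^ 2 * ∑ k, ε k ^ 2) * ‖u‖ := by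
  obtain ⟨T, hT⟩ := exists_isGalerkinProjection B hBinj L
  set θ := (∑ k, ε k ^ 2) / c ^ 2
  have hθ0 : 0 ≤ θ := div_nonneg (Finset.sum_nonneg fun k _ => sq_nonneg _) (sq_nonneg c)
  have hθ : θ ≤ 1 / 6 := by
    rw [div_le_iff₀ (pow_pos hc 2)]
    linarith
  have hlow : ∀ a : ι → 𝕜, (1 - 2 * θ) * ‖∑ k, a k • ψ k‖ ^ 2 ≤ ‖T (∑ k, a k • ψ k)‖ ^ 2 := by
    simpa only [mul_div_assoc] using hT.sq_norm_le_sq_norm_apply hB hψ heig hc hcd hv hε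
  have hTψ : LinearIndependent 𝕜 (T ∘ ψ) := by
    refine Fintype.linearIndependent_iff.mpr fun a ha =>
      Fintype.linearIndependent_iff.mp hψ.linearIndependent a ?_
    have h := hlow a
    simp only [Function.comp_apply, ← map_smul, ← map_sum] at ha
    rw [ha, norm_zero] at h
    have : ‖∑ k, a k • ψ k‖ ^ 2 ≤ 0 := by nlinarith [sq_nonneg ‖∑ k, a k • ψ k‖]
    exact norm_eq_zero.mp (pow_eq_zero_iff two_ne_zero |>.mp (le_antisymm this (sq_nonneg _)))
  refine ⟨Submodule.span 𝕜 (Set.range (T ∘ ψ)), ?_, ?_, ?_⟩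
  · exact Submodule.span_le.mpr (Set.range_subset_iff.mpr fun k => (hT (ψ k)).1)
  · rw [finrank_span_eq_card hTψ]
  intro u hu
  obtain ⟨a, rfl⟩ := (Submodule.mem_span_range_iff_exists_fun 𝕜).mp hu
  simp only [Function.comp_apply, ← map_smul, ← map_sum]
  set p := ∑ k, a k • ψ k
  have hcubic : 1 ≤ (1 + 3 * θ) ^ 2 * (1 - 2 * θ) := by
    nlinarith [mul_nonneg hθ0 hθ0, mul_nonneg (mul_nonneg hθ0 hθ0) (sub_nonneg.mpr hθ)]
  have hpT : ‖p‖ ≤ (1 + 3 * θ) * ‖T p‖ := by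
    refine (pow_le_pow_iff_left₀ (norm_nonneg _) (by positivity) two_ne_zero).mp ?_
    calc ‖p‖ ^ 2 ≤ (1 + 3 * θ) ^ 2 * ((1 - 2 * θ) * ‖p‖ ^ 2) := by
          nlinarith [sq_nonneg ‖p‖]
      _ ≤ ((1 + 3 * θ) * ‖T p‖) ^ 2 := by
          rw [mul_pow]
          exact mul_le_mul_of_nonneg_left (hlow a) (by positivity)
  calc ‖B (T p)‖ ≤ ‖B p‖ := hT.norm_map_apply_le p
    _ ≤ D * ‖p‖ := norm_map_sum_smul_le hB hψ heig hD
          (fun k => abs_le.mpr ⟨by linarith [hc.trans_le (hcd k)], hdD k⟩) a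
    _ ≤ D * ((1 + 3 * θ) * ‖T p‖) := mul_le_mul_of_nonneg_left hpT hD
    _ = (D + 3 * D / c ^ 2 * ∑ k, ε k ^ 2) * ‖T p‖ := by
          simp only [θ]
          ring

end Galerkin

section MinMax

omit [CompleteSpace H] in
theorem dd_nonneg (A : H →L[ℂ] H) (j : ℕ) (t : ℝ) : 0 ≤ dd A j t :=
  Real.sInf_nonneg fun _ hr => hr.1

omit [CompleteSpace H] in
theorem dd_one_mul_norm_le (A : H →L[ℂ] H) (t : ℝ) (v : H) :
    dd A 1 t * ‖v‖ ≤ ‖A v - (t : ℂ) • v‖ := by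
  rcases eq_or_ne v 0 with rfl | hv
  · simp
  have hv' : 0 < ‖v‖ := norm_pos_iff.mpr hv
  rw [← le_div_iff₀ hv']
  refine csInf_le ⟨0, fun _ hr => hr.1⟩ ⟨by positivity, Submodule.span ℂ {v},
    finrank_span_singleton hv, fun u hu => ?_⟩
  obtain ⟨a, rfl⟩ := Submodule.mem_span_singleton.mp hu
  rw [map_smul, smul_comm, ← smul_sub, norm_smul, norm_smul]
  exact le_of_eq (by field_simp)

omit [CompleteSpace H] in
theorem dd_mono (A : H →L[ℂ] H) (t : ℝ) {k j : ℕ} (hkj : k ≤ j)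
    (hj : ∃ V : Submodule ℂ H, j ≤ Module.finrank ℂ V) : dd A k t ≤ dd A j t := by
  obtain ⟨V₀, hV₀⟩ := hj
  obtain ⟨W₀, -, hW₀⟩ := V₀.exists_le_finrank_eq hV₀
  refine le_csInf ⟨‖A - (t : ℂ) • 1‖, norm_nonneg _, W₀, hW₀, fun u _ =>
    (A - (t : ℂ) • 1).le_opNorm u⟩ ?_
  rintro r ⟨hr, V, hV, hbound⟩
  obtain ⟨W, hWV, hW⟩ := V.exists_le_finrank_eq (hV.symm ▸ hkj)
  exact csInf_le ⟨0, fun _ hr => hr.1⟩ ⟨hr, W, hW, fun u hu => hbound u (hWV hu)⟩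

omit [CompleteSpace H] in
theorem injective_sub_smul_one_of_dd_pos (A : H →L[ℂ] H) (t : ℝ) (hd : 0 < dd A 1 t) :
    Function.Injective (A - (t : ℂ) • (1 : H →L[ℂ] H)) := by
  refine (injective_iff_map_eq_zero _).mpr fun v hv => norm_eq_zero.mp ?_
  have h := dd_one_mul_norm_le A t v
  rw [show A v - (t : ℂ) • v = (A - (t : ℂ) • 1) v from rfl, hv, norm_zero] at h
  exact le_antisymm (nonpos_of_mul_nonpos_right h hd) (norm_nonneg v)

omit [CompleteSpace H] in
theorem Fapp_le (A : H →L[ℂ] H) {L V : Submodule ℂ H} (t : ℝ) {r : ℝ} (hr : 0 ≤ r)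
    (hVL : V ≤ L) (hV : ∀ u ∈ V, ‖A u - (t : ℂ) • u‖ ≤ r * ‖u‖) :
    Fapp A L (Module.finrank ℂ V) t ≤ r :=
  csInf_le ⟨0, fun _ hr => hr.1⟩ ⟨hr, V, hVL, rfl, hV⟩

end MinMax

theorem stmt_15_general (A : H →L[ℂ] H) (hA : IsSelfAdjoint A)
    (L : Submodule ℂ H) [FiniteDimensional ℂ L] (t : ℝ)
    (m : ℕ) (φ w : Fin m → H) (hφon : Orthonormal ℂ φ)
    (hwL : ∀ j, w j ∈ L)
    (hφeig : ∀ j : Fin m,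
      A (A (φ j) - (t : ℂ) • φ j) - (t : ℂ) • (A (φ j) - (t : ℂ) • φ j) =
        (((dd A (j.1 + 1) t : ℝ) : ℂ) ^ 2) • φ j)
    (εv : Fin m → ℝ)
    (hε : ∀ j, ‖A (w j - φ j) - (t : ℂ) • (w j - φ j)‖ ≤ εv j)
    (hsum : ∑ j, εv j ^ 2 < dd A 1 t ^ 2 / 6) :
    ∀ j : Fin m, Fapp A L (j.1 + 1) t - dd A (j.1 + 1) t ≤
      3 * dd A (j.1 + 1) t / dd A 1 t ^ 2 *
        ∑ k ∈ Finset.univ.filter (fun k => k ≤ j), εv k ^ 2 := by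
  intro j
  have hsumnn := Finset.sum_nonneg fun k (_ : k ∈ Finset.univ) => sq_nonneg (εv k)
  have hd1 : 0 < dd A 1 t :=
    (dd_nonneg A 1 t).lt_of_ne fun h => by rw [← h] at hsum; linarith
  have hB : ((A - (t : ℂ) • 1 : H →L[ℂ] H) : H →ₗ[ℂ] H).IsSymmetric :=
    (ContinuousLinearMap.isSelfAdjoint_iff_isSymmetric.mp hA).sub
      (LinearMap.IsSymmetric.id.smul (Complex.conj_ofReal t))
  have hdim (q : ℕ) (hq : q ≤ m) : ∃ V : Submodule ℂ H, q ≤ Module.finrank ℂ V :=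
    ⟨Submodule.span ℂ (Set.range φ), by
      rwa [finrank_span_eq_card hφon.linearIndependent, Fintype.card_fin]⟩
  have hIic : ∑ k : Finset.Iic j, εv k ^ 2 = ∑ k ∈ Finset.univ.filter (· ≤ j), εv k ^ 2 := by
    rw [Finset.filter_ge_eq_Iic]
    exact Finset.sum_coe_sort (Finset.Iic j) fun k => εv k ^ 2
  obtain ⟨V, hVL, hVdim, hVB⟩ := exists_finrank_eq_norm_map_le _ hB
    (injective_sub_smul_one_of_dd_pos A t hd1) L (ψ := fun k : Finset.Iic j => φ k)
    (v := fun k => w k) (ε := fun k => εv k) (d := fun k => dd A (k.1.1 + 1) t)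
    (D := dd A (j.1 + 1) t)
    (hφon.comp _ Subtype.val_injective) (fun k => hφeig k) hd1
    (fun k => dd_mono A t (by omega) (hdim _ (by omega))) (dd_nonneg A _ t)
    (fun k => dd_mono A t (by simpa using Finset.mem_Iic.mp k.2) (hdim _ j.2))
    (fun k => hwL k) (fun k => hε k)
    (hIic ▸ (Finset.sum_le_sum_of_subset_of_nonneg (Finset.filter_subset _ _)
      fun k _ _ => sq_nonneg _).trans hsum.le)
  have hFapp := Fapp_le A t (by have := dd_nonneg A (j.1 + 1) t; positivity) hVL hVB
  rw [hVdim, Fintype.card_coe, Fin.card_Iic, hIic] at hFapp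
  linarith

/-- quadratic convergence. If `t ∉ spec(A)` and
`Σ ε_j² < 𝔡_1(t)²/6` where `ε_j = ‖(A-t)(w_j - φ_j)‖`, `w_j ∈ L` and `φ_j` are
orthonormal eigenvectors of `|A-t|` with `|A-t|φ_j = 𝔡_j(t)φ_j`, then
`F_L^j(t) - 𝔡_j(t) ≤ 3 (𝔡_j(t)/𝔡_1(t)²) Σ_{k=1}^j ε_k²`. -/
theorem stmt_15 (A : H →L[ℂ] H) (hA : IsSelfAdjoint A)
    (L : Submodule ℂ H) [FiniteDimensional ℂ L] (t : ℝ)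
    (ht : (t : ℂ) ∉ spectrum ℂ A)
    (m : ℕ) (φ w : Fin m → H) (hφon : Orthonormal ℂ φ)
    (hwL : ∀ j, w j ∈ L)
    (hφeig : ∀ j : Fin m,
      A (A (φ j) - (t : ℂ) • φ j) - (t : ℂ) • (A (φ j) - (t : ℂ) • φ j) =
        (((dd A (j.1 + 1) t : ℝ) : ℂ) ^ 2) • φ j)
    (εv : Fin m → ℝ)
    (hε : ∀ j, ‖A (w j - φ j) - (t : ℂ) • (w j - φ j)‖ ≤ εv j)
    (hsum : ∑ j, εv j ^ 2 < dd A 1 t ^ 2 / 6) :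
    ∀ j : Fin m, Fapp A L (j.1 + 1) t - dd A (j.1 + 1) t ≤
      3 * dd A (j.1 + 1) t / dd A 1 t ^ 2 *
        ∑ k ∈ Finset.univ.filter (fun k => k ≤ j), εv k ^ 2 :=
  stmt_15_general A hA L t m φ w hφon hwL hφeig εv hε hsum
end
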